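/- The Set-Fmla companion of ⊩_{M_mCi} satisfies the disjunction property (Disj): for all Γ ∪ {φ, ψ, χ} ⊆ L, Γ ∪ {φ ∨ ψ} ⊩_{M_mCi} {χ} if, and only if, Γ ∪ {φ} ⊩_{M_mCi} {χ} and Γ ∪ {ψ} ⊩_{M_mCi} {χ}. -/
import Mathlib


/-- Formulas over the signature Σ with unary ¬, ∘ and binary ∧, ∨, →,
freely generated from a denumerable set of propositional variables. -/
inductive Fm : Type where
  | var : ℕ → Fm
  | neg : Fm → Fm
  | circ : Fm → Fm
  | conj : Fm → Fm → Fm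
  | disj : Fm → Fm → Fm
  | imp : Fm → Fm → Fm
deriving DecidableEq

/-- Substitutions act homomorphically on formulas. -/
def subst (σ : ℕ → Fm) : Fm → Fm
  | .var n => σ n
  | .neg φ => .neg (subst σ φ)
  | .circ φ => .circ (subst σ φ)
  | .conj φ ψ => .conj (subst σ φ) (subst σ ψ)
  | .disj φ ψ => .disj (subst σ φ) (subst σ ψ)
  | .imp φ ψ => .imp (subst σ φ) (subst σ ψ)

/-- A Set-Fmla rule schema: a finite antecedent and a single succedent formula. -/
abbrev Rule : Type := Finset Fm × Fm

/-- Derivability in a Set-Fmla Hilbert system: `Derives H Γ φ` holds iff φ can be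
obtained from members of Γ by finitely many applications of substitution instances
of rules of `H`. -/
inductive Derives (H : Set Rule) : Set Fm → Fm → Prop where
  | prem : ∀ {Γ : Set Fm} {φ : Fm}, φ ∈ Γ → Derives H Γ φ
  | rule : ∀ {Γ : Set Fm} (r : Rule) (σ : ℕ → Fm), r ∈ H →
      (∀ ψ ∈ r.1, Derives H Γ (subst σ ψ)) → Derives H Γ (subst σ r.2)

/-- The five truth-values of the nd-matrix M_mCi. -/
inductive V5 : Type where
  | f | F | I | T | t
deriving DecidableEq

/-- The designated values D₅ = {I, T, t}. -/
def D5 : Set V5 := {x | x = V5.I ∨ x = V5.T ∨ x = V5.t}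

instance (x : V5) : Decidable (x ∈ D5) :=
  inferInstanceAs (Decidable (x = V5.I ∨ x = V5.T ∨ x = V5.t))

/-- Non-deterministic conjunction of M_mCi. -/
def nAnd (x y : V5) : Set V5 :=
  if x ∈ D5 ∧ y ∈ D5 then {V5.I, V5.t} else {V5.f}
/-- Non-deterministic disjunction of M_mCi. -/
def nOr (x y : V5) : Set V5 :=
  if x ∈ D5 ∨ y ∈ D5 then {V5.I, V5.t} else {V5.f}
/-- Non-deterministic implication of M_mCi. -/
def nImp (x y : V5) : Set V5 :=
  if x ∉ D5 ∨ y ∈ D5 then {V5.I, V5.t} else {V5.f}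
/-- Non-deterministic negation of M_mCi. -/
def nNeg : V5 → Set V5
  | V5.f => {V5.I, V5.t}
  | V5.F => {V5.T}
  | V5.I => {V5.I, V5.t}
  | V5.T => {V5.F}
  | V5.t => {V5.f}
/-- Non-deterministic consistency operator of M_mCi. -/
def nCirc : V5 → Set V5
  | V5.I => {V5.F}
  | _ => {V5.T}

/-- Valuations on the nd-matrix M_mCi. -/
def IsVal5 (v : Fm → V5) : Prop :=
  (∀ φ ψ : Fm, v (.conj φ ψ) ∈ nAnd (v φ) (v ψ)) ∧
  (∀ φ ψ : Fm, v (.disj φ ψ) ∈ nOr (v φ) (v ψ)) ∧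
  (∀ φ ψ : Fm, v (.imp φ ψ) ∈ nImp (v φ) (v ψ)) ∧
  (∀ φ : Fm, v (.neg φ) ∈ nNeg (v φ)) ∧
  (∀ φ : Fm, v (.circ φ) ∈ nCirc (v φ))

/-- The Set-Set entailment relation ⊩ determined by M_mCi. -/
def Ent5 (Γ Δ : Set Fm) : Prop :=
  ∀ v : Fm → V5, IsVal5 v → (∀ φ ∈ Γ, v φ ∈ D5) → ∃ δ ∈ Δ, v δ ∈ D5

/-- the Set-Fmla companion of ⊩_{M_mCi} satisfies the disjunction
property (Disj). -/
theorem stmt14 (Γ : Set Fm) (φ ψ χ : Fm) :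
    Ent5 (Γ ∪ {Fm.disj φ ψ}) {χ} ↔
      Ent5 (Γ ∪ {φ}) {χ} ∧ Ent5 (Γ ∪ {ψ}) {χ} := by
  have key : ∀ v : Fm → V5, IsVal5 v →
      (v (Fm.disj φ ψ) ∈ D5 ↔ v φ ∈ D5 ∨ v ψ ∈ D5) := by
    intro v hv
    have h := hv.2.1 φ ψ
    unfold nOr at h
    by_cases hc : v φ ∈ D5 ∨ v ψ ∈ D5
    · simp only [hc, if_true] at h
      constructor
      · intro _; exact hc
      · intro _
        simp only [Set.mem_insert_iff, Set.mem_singleton_iff] at h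
        rcases h with h | h <;> simp [h, D5]
    · simp only [hc, if_false] at h
      simp only [Set.mem_singleton_iff] at h
      constructor
      · intro hd; rw [h] at hd; simp [D5] at hd
      · intro hd; exact absurd hd hc
  constructor
  · intro h
    constructor <;>
    · intro v hv hΓ
      apply h v hv
      intro x hx
      rcases hx with hx | hx
      · exact hΓ x (Or.inl hx)
      · rcases hx
        apply (key v hv).mpr
        first
          | exact Or.inl (hΓ φ (Or.inr rfl))
          | exact Or.inr (hΓ ψ (Or.inr rfl))
  · rintro ⟨h1, h2⟩ v hv hΓ
    have hd := (key v hv).mp (hΓ _ (Or.inr rfl))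
    rcases hd with hd | hd
    · exact h1 v hv (fun x hx => hx.elim (fun hx => hΓ x (Or.inl hx)) (fun hx => by rcases hx; exact hd))
    · exact h2 v hv (fun x hx => hx.elim (fun hx => hΓ x (Or.inl hx)) (fun hx => by rcases hx; exact hd))
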